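/- arXiv:1505.00220 — 2 statements merged into one kernel-verified Lean document; each statement's English description precedes it below -/
import Mathlib

section
/- Let C be an additive symmetric monoidal category with finite coproducts and reflexive coequalizers, the latter preserved by the tensor product in each variable, and suppose the forgetful functor from the category Alg of commutative algebras in C to C has a left adjoint, with induced (monadic) symmetric algebra monad S. Then algebra modalities on C are in bijective correspondence with pairs (T, ψ) consisting of a monad T on C and a monad morphism ψ : S → T: a monad morphism ψ equips each TC with the commutative algebra structure of the S-algebra (TC, ψ_{TC};μ_C), yielding an algebra modality, and every algebra modality on T arises in this way from a unique monad morphism ψ : S → T. Under this correspondence, each component ψ_C : SC → TC is an algebra homomorphism, and ψ induces a functor F_ψ from T-algebras to S-algebras sending (A, ν) to (A, ψ_A;ν). -/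
/-!
Write `S` for the monad of `F ⊣ U`. Every `S`-algebra `(A, ν)` is a commutative algebra, with
multiplication `(η ⊗ η) ; m ; ν` and unit `e ; ν`: `ν` is a homomorphism out of the free algebra
`S A` with section `η`, and the laws transfer along such a split epimorphism; moreover every
`S`-algebra map is then an algebra map. A monad morphism `ψ` makes `T X` the `S`-algebra
`(T X, ψ ; μ)`, and `T f`, `μ` are `T`-algebra maps, hence algebra maps: an algebra modality.
Conversely, an algebra modality makes `T X` a commutative algebra, so by freeness `η^T_X` extends
uniquely to an algebra map `ψ_X : S X ⟶ T X`; uniqueness of such extensions yields the monad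
morphism laws of `ψ` and its uniqueness.
-/

open CategoryTheory CategoryTheory.Limits CategoryTheory.MonoidalCategory

universe v u

namespace CodiffPaper

/-- A category enriched in commutative monoids: each hom-set is a commutative
monoid and composition is biadditive (and preserves zero). -/
class CMonEnriched (C : Type u) [Category.{v} C] where
  [homMonoid : ∀ X Y : C, AddCommMonoid (X ⟶ Y)]
  add_comp : ∀ {X Y Z : C} (f g : X ⟶ Y) (h : Y ⟶ Z), (f + g) ≫ h = f ≫ h + g ≫ h
  comp_add : ∀ {X Y Z : C} (f : X ⟶ Y) (g h : Y ⟶ Z), f ≫ (g + h) = f ≫ g + f ≫ h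
  zero_comp : ∀ {X Y Z : C} (f : Y ⟶ Z), (0 : X ⟶ Y) ≫ f = (0 : X ⟶ Z)
  comp_zero : ∀ {X Y Z : C} (f : X ⟶ Y), f ≫ (0 : Y ⟶ Z) = (0 : X ⟶ Z)

attribute [instance] CMonEnriched.homMonoid

instance (priority := 100) CMonEnriched.toHasZeroMorphisms
    (C : Type u) [Category.{v} C] [CMonEnriched C] : HasZeroMorphisms C where
  zero X Y := inferInstance
  comp_zero := fun {X Y} f Z => CMonEnriched.comp_zero f
  zero_comp := fun X {Y Z} f => CMonEnriched.zero_comp f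

/-- An additive symmetric monoidal category: commutative-monoid enriched, and
the tensor product is additive in each variable. -/
class AdditiveMonoidal (C : Type u) [Category.{v} C] [MonoidalCategory C] extends
    CMonEnriched C where
  add_tensorHom : ∀ {X Y Z W : C} (f g : X ⟶ Y) (h : Z ⟶ W),
    (f + g) ⊗ₘ h = (f ⊗ₘ h) + (g ⊗ₘ h)
  tensorHom_add : ∀ {X Y Z W : C} (f : X ⟶ Y) (g h : Z ⟶ W),
    f ⊗ₘ (g + h) = (f ⊗ₘ g) + (f ⊗ₘ h)
  zero_tensorHom : ∀ {X Y Z W : C} (h : Z ⟶ W), (0 : X ⟶ Y) ⊗ₘ h = 0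
  tensorHom_zero : ∀ {X Y Z W : C} (f : X ⟶ Y), f ⊗ₘ (0 : Z ⟶ W) = 0

variable {C : Type u} [Category.{v} C]

/-- `π : Y ⟶ Q` is a coequalizer of `f` and `g` (elementwise formulation). -/
def IsCoeq {X Y Q : C} (f g : X ⟶ Y) (π : Y ⟶ Q) : Prop :=
  f ≫ π = g ≫ π ∧ ∀ {Z : C} (h : Y ⟶ Z), f ≫ h = g ≫ h → ∃! t : Q ⟶ Z, π ≫ t = h

/-- The tensor product preserves reflexive coequalizers in each variable. -/
def TensorPreservesReflCoeq (C : Type u) [Category.{v} C] [MonoidalCategory C] : Prop :=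
  ∀ {X Y Q : C} (f g : X ⟶ Y) (s : Y ⟶ X) (π : Y ⟶ Q),
    s ≫ f = 𝟙 Y → s ≫ g = 𝟙 Y → IsCoeq f g π →
      ∀ Z : C, IsCoeq (Z ◁ f) (Z ◁ g) (Z ◁ π) ∧ IsCoeq (f ▷ Z) (g ▷ Z) (π ▷ Z)

section Monoidal

variable [MonoidalCategory C]

/-- A commutative algebra (commutative monoid object) structure. -/
structure IsCommAlg [SymmetricCategory C] {A : C} (mul : A ⊗ A ⟶ A) (unit : 𝟙_ C ⟶ A) : Prop where
  one_mul : (unit ▷ A) ≫ mul = (λ_ A).hom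
  mul_one : (A ◁ unit) ≫ mul = (ρ_ A).hom
  mul_assoc : (mul ▷ A) ≫ mul = (α_ A A A).hom ≫ (A ◁ mul) ≫ mul
  mul_comm : (β_ A A).hom ≫ mul = mul

/-- `f : A ⟶ B` is a homomorphism of algebras. -/
structure IsAlgHom {A B : C} (mulA : A ⊗ A ⟶ A) (unitA : 𝟙_ C ⟶ A)
    (mulB : B ⊗ B ⟶ B) (unitB : 𝟙_ C ⟶ B) (f : A ⟶ B) : Prop where
  map_mul : (f ⊗ₘ f) ≫ mulB = mulA ≫ f
  map_one : unitA ≫ f = unitB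

/-- `act : A ⊗ M ⟶ M` is a module structure on `M` over the algebra `(A, mulA, unitA)`. -/
structure IsModule {A M : C} (mulA : A ⊗ A ⟶ A) (unitA : 𝟙_ C ⟶ A)
    (act : A ⊗ M ⟶ M) : Prop where
  one_act : (unitA ▷ M) ≫ act = (λ_ M).hom
  mul_act : (mulA ▷ M) ≫ act = (α_ A A M).hom ≫ (A ◁ act) ≫ act

/-- A morphism of modules over `A` (a linear map). -/
def IsModuleMap {A M N : C} (actM : A ⊗ M ⟶ M) (actN : A ⊗ N ⟶ N) (h : M ⟶ N) : Prop :=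
  actM ≫ h = (A ◁ h) ≫ actN

/-- The free `A`-module structure on `A ⊗ X`. -/
def freeAct {A : C} (mulA : A ⊗ A ⟶ A) (X : C) : A ⊗ (A ⊗ X) ⟶ A ⊗ X :=
  (α_ A A X).inv ≫ (mulA ▷ X)

/-- `der : A ⟶ M` is a derivation from the algebra `(A, mulA, unitA)` to the module
`(M, act)`:  `m;der = c;(1⊗der);• + (1⊗der);•` and `e;der = 0`. -/
def IsDerivation [SymmetricCategory C] [CMonEnriched C] {A M : C}
    (mulA : A ⊗ A ⟶ A) (unitA : 𝟙_ C ⟶ A) (act : A ⊗ M ⟶ M) (der : A ⟶ M) : Prop :=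
  (mulA ≫ der = (β_ A A).hom ≫ (A ◁ der) ≫ act + (A ◁ der) ≫ act) ∧ unitA ≫ der = 0

variable [SymmetricCategory C]

/-- An algebra modality: each `T X` is naturally a commutative algebra. -/
structure IsAlgebraModality (T : Monad C)
    (mul : ∀ X : C, T.obj X ⊗ T.obj X ⟶ T.obj X)
    (unit : ∀ X : C, 𝟙_ C ⟶ T.obj X) : Prop where
  commAlg : ∀ X : C, IsCommAlg (mul X) (unit X)
  map_hom : ∀ {X Y : C} (f : X ⟶ Y),
    IsAlgHom (mul X) (unit X) (mul Y) (unit Y) (T.map f)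
  mu_hom : ∀ X : C,
    IsAlgHom (mul (T.obj X)) (unit (T.obj X)) (mul X) (unit X) (T.μ.app X)

/-- A (bundled) algebra modality on `C`. -/
structure AlgebraModality (C : Type u) [Category.{v} C] [MonoidalCategory C]
    [SymmetricCategory C] where
  T : Monad C
  mul : ∀ X : C, T.obj X ⊗ T.obj X ⟶ T.obj X
  unit : ∀ X : C, 𝟙_ C ⟶ T.obj X
  ismod : IsAlgebraModality T mul unit

/-- The multiplication of the commutative algebra induced on a `T`-algebra. -/
def algMul (Φ : AlgebraModality C) (A : Φ.T.Algebra) : A.A ⊗ A.A ⟶ A.A :=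
  (Φ.T.η.app A.A ⊗ₘ Φ.T.η.app A.A) ≫ Φ.mul A.A ≫ A.a

/-- The unit of the commutative algebra induced on a `T`-algebra. -/
def algUnit (Φ : AlgebraModality C) (A : Φ.T.Algebra) : 𝟙_ C ⟶ A.A :=
  Φ.unit A.A ≫ A.a

/-- `f : A ⟶ B` is a homomorphism of `T`-algebras (elementwise formulation). -/
def IsTAlgebraHom (T : Monad C) {A B : C} (νA : T.obj A ⟶ A) (νB : T.obj B ⟶ B)
    (f : A ⟶ B) : Prop :=
  T.map f ≫ νB = νA ≫ f

/-- `b : T X ⟶ X` is a `T`-algebra structure map. -/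
def IsTAlgStr (T : Monad C) {X : C} (b : T.obj X ⟶ X) : Prop :=
  (T.η.app X ≫ b = 𝟙 X) ∧ (T.μ.app X ≫ b = T.map b ≫ b)

variable [AdditiveMonoidal C]

/-- The axioms for a codifferential category on an additive symmetric monoidal
category: an algebra modality together with a deriving transform satisfying
(d1)–(d4). -/
structure IsCodifferential (T : Monad C)
    (mul : ∀ X : C, T.obj X ⊗ T.obj X ⟶ T.obj X)
    (unit : ∀ X : C, 𝟙_ C ⟶ T.obj X)
    (d : ∀ X : C, T.obj X ⟶ T.obj X ⊗ X) : Prop where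
  ismod : IsAlgebraModality T mul unit
  d_natural : ∀ {X Y : C} (f : X ⟶ Y), T.map f ≫ d Y = d X ≫ (T.map f ⊗ₘ f)
  d1 : ∀ X : C, unit X ≫ d X = 0
  d2 : ∀ X : C, mul X ≫ d X =
    (T.obj X ◁ d X) ≫ (α_ (T.obj X) (T.obj X) X).inv ≫ (mul X ▷ X)
    + (d X ▷ T.obj X) ≫ (α_ (T.obj X) X (T.obj X)).hom ≫
        (T.obj X ◁ (β_ X (T.obj X)).hom) ≫ (α_ (T.obj X) (T.obj X) X).inv ≫ (mul X ▷ X)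
  d3 : ∀ X : C, T.η.app X ≫ d X = (λ_ X).inv ≫ (unit X ▷ X)
  d4 : ∀ X : C, T.μ.app X ≫ d X =
    d (T.obj X) ≫ (T.μ.app X ⊗ₘ d X) ≫ (α_ (T.obj X) (T.obj X) X).inv ≫ (mul X ▷ X)

/-- A (bundled) codifferential category structure on `C`. -/
structure Codifferential (C : Type u) [Category.{v} C] [MonoidalCategory C]
    [SymmetricCategory C] [AdditiveMonoidal C] extends AlgebraModality C where
  d : ∀ X : C, T.obj X ⟶ T.obj X ⊗ X
  iscodiff : IsCodifferential T mul unit d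

section Biproducts

variable [HasBinaryBiproducts C]

/-- The second component of the structure map of `W(A,M)`:
`β₂ = d;(Tπ₁ ⊗ π₂);(ν ⊗ 1);•`. -/
noncomputable def Wbeta2 (D : Codifferential C) (A : D.T.Algebra) {M : C} (act : A.A ⊗ M ⟶ M) :
    D.T.obj (A.A ⊞ M) ⟶ M :=
  D.d (A.A ⊞ M) ≫ (D.T.map biprod.fst ⊗ₘ biprod.snd) ≫ (A.a ⊗ₘ 𝟙 M) ≫ act

/-- The structure map `β = ⟨β₁, β₂⟩ : T(A ⊕ M) ⟶ A ⊕ M` of `W(A,M)`. -/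
noncomputable def Wbeta (D : Codifferential C) (A : D.T.Algebra) {M : C} (act : A.A ⊗ M ⟶ M) :
    D.T.obj (A.A ⊞ M) ⟶ A.A ⊞ M :=
  biprod.lift (D.T.map biprod.fst ≫ A.a) (Wbeta2 D A act)

end Biproducts

/-- A Kähler category: an additive symmetric monoidal category with an algebra
modality such that every algebra `T X` has a module of Kähler differentials. -/
structure KahlerCategory (C : Type u) [Category.{v} C] [MonoidalCategory C]
    [SymmetricCategory C] [AdditiveMonoidal C] extends AlgebraModality C where
  Ω : C → C
  act : ∀ X : C, T.obj X ⊗ Ω X ⟶ Ω X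
  ismodule : ∀ X : C, IsModule (mul X) (unit X) (act X)
  dK : ∀ X : C, T.obj X ⟶ Ω X
  isder : ∀ X : C, IsDerivation (mul X) (unit X) (act X) (dK X)
  universal : ∀ (X : C) {M : C} (actM : T.obj X ⊗ M ⟶ M),
    IsModule (mul X) (unit X) actM →
    ∀ der : T.obj X ⟶ M, IsDerivation (mul X) (unit X) actM der →
      ∃! h : Ω X ⟶ M, IsModuleMap (act X) actM h ∧ dK X ≫ h = der

end Monoidal


/-- The multiplication on `T X` induced by a monad morphism `ψ : S ⟶ T` from the
symmetric algebra monad `S`: the commutative algebra structure of the `S`-algebra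
`(T X, ψ_{T X} ; μ_X)`. -/
def psiMul {C : Type u} [Category.{v} C] [MonoidalCategory C] [SymmetricCategory C]
    (F : C ⥤ CommMon C) (adj : F ⊣ CommMon.forget₂Mon C ⋙ Mon.forget C)
    {T : Monad C} (ψ : adj.toMonad ⟶ T) (X : C) :
    T.obj X ⊗ T.obj X ⟶ T.obj X :=
  (adj.toMonad.η.app (T.obj X) ⊗ₘ adj.toMonad.η.app (T.obj X)) ≫
    MonObj.mul (X := (F.obj (T.obj X)).X) ≫ ψ.app (T.obj X) ≫ T.μ.app X

/-- The unit on `T X` induced by a monad morphism `ψ : S ⟶ T`. -/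
def psiUnit {C : Type u} [Category.{v} C] [MonoidalCategory C] [SymmetricCategory C]
    (F : C ⥤ CommMon C) (adj : F ⊣ CommMon.forget₂Mon C ⋙ Mon.forget C)
    {T : Monad C} (ψ : adj.toMonad ⟶ T) (X : C) : 𝟙_ C ⟶ T.obj X :=
  MonObj.one (X := (F.obj (T.obj X)).X) ≫ ψ.app (T.obj X) ≫ T.μ.app X

section Transfer

variable [MonoidalCategory C]

lemma IsAlgHom.comp {A B D : C} {mulA : A ⊗ A ⟶ A} {oneA : 𝟙_ C ⟶ A} {mulB : B ⊗ B ⟶ B}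
    {oneB : 𝟙_ C ⟶ B} {mulD : D ⊗ D ⟶ D} {oneD : 𝟙_ C ⟶ D} {f : A ⟶ B} {g : B ⟶ D}
    (hf : IsAlgHom mulA oneA mulB oneB f) (hg : IsAlgHom mulB oneB mulD oneD g) :
    IsAlgHom mulA oneA mulD oneD (f ≫ g) where
  map_mul := by
    rw [← tensorHom_comp_tensorHom, Category.assoc, hg.map_mul, reassoc_of% hf.map_mul]
  map_one := by rw [reassoc_of% hf.map_one, hg.map_one]

variable [SymmetricCategory C]

lemma isAlgHom_hom {M N : CommMon C} (f : M ⟶ N) :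
    IsAlgHom MonObj.mul MonObj.one MonObj.mul MonObj.one f.hom.hom :=
  ⟨(IsMonHom.mul_hom f.hom.hom).symm, IsMonHom.one_hom f.hom.hom⟩

def IsCommAlg.toCommMon {A : C} {mul : A ⊗ A ⟶ A} {one : 𝟙_ C ⟶ A}
    (h : IsCommAlg mul one) : CommMon C :=
  letI : MonObj A :=
    { one, mul, one_mul := h.one_mul, mul_one := h.mul_one, mul_assoc := h.mul_assoc }
  { X := A, comm := ⟨h.mul_comm⟩ }

lemma IsAlgHom.isCommAlg_of_retraction {M A : C} [MonObj M] [IsCommMonObj M]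
    {mul : A ⊗ A ⟶ A} {one : 𝟙_ C ⟶ A} {p : M ⟶ A} {s : A ⟶ M}
    (hp : IsAlgHom MonObj.mul MonObj.one mul one p) (hsp : s ≫ p = 𝟙 A) :
    IsCommAlg mul one := by
  have hmul := hp.map_mul
  have hone := hp.map_one
  constructor
  · have : one ▷ A = (MonObj.one ⊗ₘ s) ≫ (p ⊗ₘ p) := by
      simp [tensorHom_comp_tensorHom, hsp, hone]
    rw [this, Category.assoc, hmul, tensorHom_def', Category.assoc, MonObj.one_mul_assoc,
      leftUnitor_naturality_assoc, hsp, Category.comp_id]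
  · have : A ◁ one = (s ⊗ₘ MonObj.one) ≫ (p ⊗ₘ p) := by
      simp [tensorHom_comp_tensorHom, hsp, hone]
    rw [this, Category.assoc, hmul, MonoidalCategory.tensorHom_def, Category.assoc,
      MonObj.mul_one_assoc, rightUnitor_naturality_assoc, hsp, Category.comp_id]
  · have : Epi ((p ⊗ₘ p) ⊗ₘ p) :=
      (SplitEpi.mk ((s ⊗ₘ s) ⊗ₘ s) (by simp [tensorHom_comp_tensorHom, hsp])).epi
    rw [← cancel_epi ((p ⊗ₘ p) ⊗ₘ p)]
    calc ((p ⊗ₘ p) ⊗ₘ p) ≫ (mul ▷ A) ≫ mul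
          = (MonObj.mul ▷ M) ≫ MonObj.mul ≫ p := by
          rw [tensorHom_comp_whiskerRight_assoc, hmul, ← whiskerRight_comp_tensorHom_assoc, hmul]
      _ = (α_ M M M).hom ≫ (M ◁ MonObj.mul) ≫ MonObj.mul ≫ p := by
          rw [MonObj.mul_assoc_assoc]
      _ = ((p ⊗ₘ p) ⊗ₘ p) ≫ (α_ A A A).hom ≫ (A ◁ mul) ≫ mul := by
          rw [associator_naturality_assoc, tensorHom_comp_whiskerLeft_assoc, hmul,
            ← whiskerLeft_comp_tensorHom_assoc, hmul]
  · have : (β_ A A).hom = (s ⊗ₘ s) ≫ (β_ M M).hom ≫ (p ⊗ₘ p) := by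
      rw [BraidedCategory.braiding_naturality_assoc, tensorHom_comp_tensorHom, hsp,
        id_tensorHom_id, Category.comp_id]
    rw [this, Category.assoc, Category.assoc, hmul, IsCommMonObj.mul_comm_assoc, ← hmul,
      ← Category.assoc, tensorHom_comp_tensorHom, hsp, id_tensorHom_id, Category.id_comp]

end Transfer

section SymmetricAlgebra

variable [MonoidalCategory C] [SymmetricCategory C]
  {F : C ⥤ CommMon C} (adj : F ⊣ CommMon.forget₂Mon C ⋙ Mon.forget C)

-- `MonObj.mul` of `F.obj X`, retyped over `adj.toMonad.obj X` (only defeq to `(F.obj X).X`)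
-- so that it rewrites cleanly against the monad `adj.toMonad`.
abbrev symMul (X : C) : adj.toMonad.obj X ⊗ adj.toMonad.obj X ⟶ adj.toMonad.obj X :=
  MonObj.mul (X := (F.obj X).X)

abbrev symOne (X : C) : 𝟙_ C ⟶ adj.toMonad.obj X :=
  MonObj.one (X := (F.obj X).X)

def algebraMul (A : adj.toMonad.Algebra) : A.A ⊗ A.A ⟶ A.A :=
  (adj.toMonad.η.app A.A ⊗ₘ adj.toMonad.η.app A.A) ≫ symMul adj A.A ≫ A.a

def algebraOne (A : adj.toMonad.Algebra) : 𝟙_ C ⟶ A.A :=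
  symOne adj A.A ≫ A.a

lemma isAlgHom_map {X Y : C} (f : X ⟶ Y) :
    IsAlgHom (symMul adj X) (symOne adj X) (symMul adj Y) (symOne adj Y) (adj.toMonad.map f) :=
  isAlgHom_hom (F.map f)

lemma isAlgHom_μ (X : C) :
    IsAlgHom (symMul adj (adj.toMonad.obj X)) (symOne adj _) (symMul adj X) (symOne adj X)
      (adj.toMonad.μ.app X) :=
  isAlgHom_hom (adj.counit.app (F.obj X))

lemma algebraMul_eq_of_isAlgHom (A : adj.toMonad.Algebra) {mul : A.A ⊗ A.A ⟶ A.A}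
    {one : 𝟙_ C ⟶ A.A} (h : IsAlgHom (symMul adj A.A) (symOne adj A.A) mul one A.a) :
    algebraMul adj A = mul := by
  rw [algebraMul, ← h.map_mul, ← Category.assoc, tensorHom_comp_tensorHom, A.unit,
    id_tensorHom_id, Category.id_comp]

lemma algebraOne_eq_of_isAlgHom (A : adj.toMonad.Algebra) {mul : A.A ⊗ A.A ⟶ A.A}
    {one : 𝟙_ C ⟶ A.A} (h : IsAlgHom (symMul adj A.A) (symOne adj A.A) mul one A.a) :
    algebraOne adj A = one :=
  h.map_one

lemma algebraMul_free (X : C) :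
    algebraMul adj (adj.toMonad.free.obj X) = symMul adj X :=
  algebraMul_eq_of_isAlgHom adj _ (isAlgHom_μ adj X)

lemma algebraOne_free (X : C) :
    algebraOne adj (adj.toMonad.free.obj X) = symOne adj X :=
  algebraOne_eq_of_isAlgHom adj _ (isAlgHom_μ adj X)

lemma isAlgHom_algebraHom {A B : adj.toMonad.Algebra} (f : A ⟶ B) :
    IsAlgHom (algebraMul adj A) (algebraOne adj A) (algebraMul adj B) (algebraOne adj B) f.f := by
  have hη : f.f ≫ adj.toMonad.η.app B.A = adj.toMonad.η.app A.A ≫ adj.toMonad.map f.f :=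
    adj.toMonad.η.naturality f.f
  constructor
  · rw [algebraMul, algebraMul, tensorHom_comp_tensorHom_assoc, hη,
      ← tensorHom_comp_tensorHom_assoc, reassoc_of% (isAlgHom_map adj f.f).map_mul, f.h]
    simp only [Category.assoc]
  · rw [algebraOne, algebraOne, Category.assoc, ← f.h, ← (isAlgHom_map adj f.f).map_one,
      Category.assoc]

lemma isAlgHom_algebra_a (A : adj.toMonad.Algebra) :
    IsAlgHom (symMul adj A.A) (symOne adj A.A) (algebraMul adj A) (algebraOne adj A)
      A.a := by
  have h := isAlgHom_algebraHom adj (A := adj.toMonad.free.obj A.A) ⟨A.a, A.assoc.symm⟩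
  rw [algebraMul_free, algebraOne_free] at h
  exact h

lemma isCommAlg_algebra (A : adj.toMonad.Algebra) :
    IsCommAlg (algebraMul adj A) (algebraOne adj A) :=
  IsAlgHom.isCommAlg_of_retraction (M := (F.obj A.A).X) (isAlgHom_algebra_a adj A) A.unit

variable {X A : C} {mul : A ⊗ A ⟶ A} {one : 𝟙_ C ⟶ A}

def symLift (hA : IsCommAlg mul one) (f : X ⟶ A) : adj.toMonad.obj X ⟶ A :=
  ((adj.homEquiv X hA.toCommMon).symm f).hom.hom

lemma unit_comp_symLift (hA : IsCommAlg mul one) (f : X ⟶ A) :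
    adj.toMonad.η.app X ≫ symLift adj hA f = f := by
  have h := (adj.homEquiv X hA.toCommMon).apply_symm_apply f
  rwa [Adjunction.homEquiv_unit] at h

lemma isAlgHom_symLift (hA : IsCommAlg mul one) (f : X ⟶ A) :
    IsAlgHom (symMul adj X) (symOne adj X) mul one (symLift adj hA f) :=
  isAlgHom_hom ((adj.homEquiv X hA.toCommMon).symm f)

lemma symHom_ext (hA : IsCommAlg mul one) {f g : adj.toMonad.obj X ⟶ A}
    (hf : IsAlgHom (symMul adj X) (symOne adj X) mul one f)
    (hg : IsAlgHom (symMul adj X) (symOne adj X) mul one g)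
    (h : adj.toMonad.η.app X ≫ f = adj.toMonad.η.app X ≫ g) : f = g := by
  let bundle {k : adj.toMonad.obj X ⟶ A} (hk : IsAlgHom (symMul adj X) (symOne adj X) mul one k) :
      F.obj X ⟶ hA.toCommMon :=
    { hom := { hom := k, isMonHom_hom := ⟨hk.map_one, hk.map_mul.symm⟩ } }
  have : bundle hf = bundle hg := by
    apply (adj.homEquiv X hA.toCommMon).injective
    rw [Adjunction.homEquiv_unit, Adjunction.homEquiv_unit]
    exact h
  exact congrArg (fun k => k.hom.hom) this

end SymmetricAlgebra

section MonadHom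

variable [MonoidalCategory C] [SymmetricCategory C]
  {F : C ⥤ CommMon C} {adj : F ⊣ CommMon.forget₂Mon C ⋙ Mon.forget C} {T : Monad C}

/-- `psiMul F adj ψ X` and `psiUnit F adj ψ X` are by definition `algebraMul` and `algebraOne` of
this `S`-algebra `(T X, ψ_{T X} ; μ_X)`. -/
abbrev psiAlgebra (ψ : adj.toMonad ⟶ T) (X : C) : adj.toMonad.Algebra :=
  (Monad.algebraFunctorOfMonadHom ψ).obj (T.free.obj X)

lemma isAlgebraModality_psi (ψ : adj.toMonad ⟶ T) :
    IsAlgebraModality T (psiMul F adj ψ) (psiUnit F adj ψ) where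
  commAlg X := isCommAlg_algebra adj (psiAlgebra ψ X)
  map_hom f := isAlgHom_algebraHom adj ((Monad.algebraFunctorOfMonadHom ψ).map (T.free.map f))
  mu_hom X := isAlgHom_algebraHom adj ((Monad.algebraFunctorOfMonadHom ψ).map
    (⟨T.μ.app X, T.assoc X⟩ : T.free.obj (T.obj X) ⟶ T.free.obj X))

lemma isAlgHom_psi_app (ψ : adj.toMonad ⟶ T) (X : C) :
    IsAlgHom (symMul adj X) (symOne adj X) (psiMul F adj ψ X) (psiUnit F adj ψ X) (ψ.app X) := by
  have h := isAlgHom_algebraHom adj (A := adj.toMonad.free.obj X) (B := psiAlgebra ψ X)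
    ⟨ψ.app X, (Category.assoc _ _ _).symm.trans (ψ.app_μ X).symm⟩
  rw [algebraMul_free, algebraOne_free] at h
  exact h

end MonadHom

section AlgebraModality

variable [MonoidalCategory C] [SymmetricCategory C]
  {F : C ⥤ CommMon C} (adj : F ⊣ CommMon.forget₂Mon C ⋙ Mon.forget C) {T : Monad C}
  {mul : ∀ X : C, T.obj X ⊗ T.obj X ⟶ T.obj X} {unit : ∀ X : C, 𝟙_ C ⟶ T.obj X}
  (hmod : IsAlgebraModality T mul unit)

def IsAlgebraModality.monadHom : adj.toMonad ⟶ T where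
  app X := symLift adj (hmod.commAlg X) (T.η.app X)
  naturality X Y f := by
    refine symHom_ext adj (hmod.commAlg Y) ((isAlgHom_map adj f).comp (isAlgHom_symLift ..))
      ((isAlgHom_symLift ..).comp (hmod.map_hom f)) ?_
    have hS : f ≫ adj.toMonad.η.app Y = adj.toMonad.η.app X ≫ adj.toMonad.map f :=
      adj.toMonad.η.naturality f
    rw [← reassoc_of% hS, unit_comp_symLift, ← Category.assoc, unit_comp_symLift]
    exact T.η.naturality f
  app_η X := unit_comp_symLift ..
  app_μ X := by
    refine symHom_ext adj (hmod.commAlg X) ((isAlgHom_μ adj X).comp (isAlgHom_symLift ..))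
      (((isAlgHom_map adj _).comp (isAlgHom_symLift ..)).comp (hmod.mu_hom X)) ?_
    set ψX := symLift adj (hmod.commAlg X) (T.η.app X)
    have hS : ψX ≫ adj.toMonad.η.app (T.obj X) =
        adj.toMonad.η.app (adj.toMonad.obj X) ≫ adj.toMonad.map ψX :=
      adj.toMonad.η.naturality ψX
    rw [Monad.left_unit_assoc, Category.assoc, ← Category.assoc (adj.toMonad.η.app _), ← hS,
      Category.assoc, ← Category.assoc (adj.toMonad.η.app (T.obj X)), unit_comp_symLift,
      T.left_unit]
    exact (Category.comp_id _).symm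

lemma IsAlgebraModality.psiMul_monadHom (X : C) : psiMul F adj (hmod.monadHom adj) X = mul X :=
  algebraMul_eq_of_isAlgHom adj (psiAlgebra _ X) ((isAlgHom_symLift ..).comp (hmod.mu_hom X))

lemma IsAlgebraModality.psiUnit_monadHom (X : C) : psiUnit F adj (hmod.monadHom adj) X = unit X :=
  algebraOne_eq_of_isAlgHom adj (psiAlgebra _ X) ((isAlgHom_symLift ..).comp (hmod.mu_hom X))

lemma IsAlgebraModality.eq_monadHom (ψ : adj.toMonad ⟶ T)
    (hψ : ∀ X : C, psiMul F adj ψ X = mul X ∧ psiUnit F adj ψ X = unit X) :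
    ψ = hmod.monadHom adj := by
  refine MonadHom.ext' _ _ (funext fun X =>
    symHom_ext adj (hmod.commAlg X) ?_ (isAlgHom_symLift ..) ?_)
  · rw [← (hψ X).1, ← (hψ X).2]
    exact isAlgHom_psi_app ψ X
  · rw [ψ.app_η]
    exact (unit_comp_symLift ..).symm

end AlgebraModality

theorem statement2_general {C : Type u} [Category.{v} C] [MonoidalCategory C] [SymmetricCategory C]
    (F : C ⥤ CommMon C) (adj : F ⊣ CommMon.forget₂Mon C ⋙ Mon.forget C)
    (T : Monad C) :
    (∀ ψ : adj.toMonad ⟶ T,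
      -- `ψ` yields an algebra modality on `T`
      IsAlgebraModality T (psiMul F adj ψ) (psiUnit F adj ψ) ∧
      -- each component `ψ_X : S X ⟶ T X` is an algebra homomorphism
      (∀ X : C,
        IsAlgHom (MonObj.mul (X := (F.obj X).X)) (MonObj.one (X := (F.obj X).X)) (psiMul F adj ψ X) (psiUnit F adj ψ X)
          (ψ.app X)) ∧
      -- `ψ` induces a functor from `T`-algebras to `S`-algebras, `(A, ν) ↦ (A, ψ_A ; ν)`
      (∃ G : T.Algebra ⥤ adj.toMonad.Algebra,
        ∀ A : T.Algebra, (G.obj A).A = A.A ∧ HEq (G.obj A).a (ψ.app A.A ≫ A.a))) ∧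
    -- every algebra modality on `T` arises from a unique monad morphism `ψ : S ⟶ T`
    (∀ (mul : ∀ X : C, T.obj X ⊗ T.obj X ⟶ T.obj X) (unit : ∀ X : C, 𝟙_ C ⟶ T.obj X),
      IsAlgebraModality T mul unit →
      ∃! ψ : adj.toMonad ⟶ T,
        ∀ X : C, psiMul F adj ψ X = mul X ∧ psiUnit F adj ψ X = unit X) := by
  refine ⟨fun ψ => ⟨isAlgebraModality_psi ψ, isAlgHom_psi_app ψ,
    Monad.algebraFunctorOfMonadHom ψ, fun A => ⟨rfl, HEq.rfl⟩⟩, fun mul unit hmod => ?_⟩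
  exact ⟨hmod.monadHom adj,
    fun X => ⟨hmod.psiMul_monadHom adj X, hmod.psiUnit_monadHom adj X⟩, hmod.eq_monadHom adj⟩

/-- algebra modalities on a monad `T` are in bijective correspondence with
monad morphisms `ψ : S ⟶ T` from the symmetric algebra monad `S`. -/
theorem statement2 {C : Type u} [Category.{v} C] [MonoidalCategory C] [SymmetricCategory C]
    [AdditiveMonoidal C] [HasFiniteCoproducts C] [HasReflexiveCoequalizers C]
    (hpres : TensorPreservesReflCoeq C)
    (F : C ⥤ CommMon C) (adj : F ⊣ CommMon.forget₂Mon C ⋙ Mon.forget C)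
    (T : Monad C) :
    (∀ ψ : adj.toMonad ⟶ T,
      -- `ψ` yields an algebra modality on `T`
      IsAlgebraModality T (psiMul F adj ψ) (psiUnit F adj ψ) ∧
      -- each component `ψ_X : S X ⟶ T X` is an algebra homomorphism
      (∀ X : C,
        IsAlgHom (MonObj.mul (X := (F.obj X).X)) (MonObj.one (X := (F.obj X).X)) (psiMul F adj ψ X) (psiUnit F adj ψ X)
          (ψ.app X)) ∧
      -- `ψ` induces a functor from `T`-algebras to `S`-algebras, `(A, ν) ↦ (A, ψ_A ; ν)`
      (∃ G : T.Algebra ⥤ adj.toMonad.Algebra,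
        ∀ A : T.Algebra, (G.obj A).A = A.A ∧ HEq (G.obj A).a (ψ.app A.A ≫ A.a))) ∧
    -- every algebra modality on `T` arises from a unique monad morphism `ψ : S ⟶ T`
    (∀ (mul : ∀ X : C, T.obj X ⊗ T.obj X ⟶ T.obj X) (unit : ∀ X : C, 𝟙_ C ⟶ T.obj X),
      IsAlgebraModality T mul unit →
      ∃! ψ : adj.toMonad ⟶ T,
        ∀ X : C, psiMul F adj ψ X = mul X ∧ psiUnit F adj ψ X = unit X) :=
  statement2_general F adj T

end CodiffPaper
end

section
/- Let C be a codifferential category with finite coproducts, g : A → B a morphism of T-algebras, and N a module over the induced algebra B. Then the commutative square in the category of T-algebras with top edge g ⊕ 1_N : W(A, N_A) → W(B, N), left edge π₁ : W(A, N_A) → A, right edge π₁ : W(B, N) → B, and bottom edge g : A → B, is a pullback square. Consequently, the functor W : Mod_T → (C^T)^→ sending (A, M) to π₁ : W(A,M) → A and (g, h) : (A,M) → (B,N) to the square with top g ⊕ h, which satisfies cod ∘ W = (projection Mod_T → C^T), is a fibred functor over C^T. -/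
open CategoryTheory CategoryTheory.Limits CategoryTheory.MonoidalCategory

universe v u

namespace CodiffPaper

variable {C : Type u} [Category.{v} C]

/-! The only candidate for the mediating map is `⟨v, u ≫ π₂⟩`. It is a map of `T`-algebras because,
by naturality of the deriving transform and since `g` is a map of `T`-algebras, the second component
of the structure map of `W(A, N_A)` is that of `W(B, N)` precomposed with `T(g ⊕ 1)`. -/

section SquareZeroExtension

variable {C : Type u} [Category.{v} C] [MonoidalCategory C] [SymmetricCategory C]
  [AdditiveMonoidal C] [HasBinaryBiproducts C] (D : Codifferential C)

theorem isTAlgebraHom_Wbeta_iff {X : C} (q : D.T.obj X ⟶ X) (A : D.T.Algebra) {M : C}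
    (act : A.A ⊗ M ⟶ M) (t : X ⟶ A.A ⊞ M) :
    IsTAlgebraHom D.T q (Wbeta D A act) t ↔
      IsTAlgebraHom D.T q A.a (t ≫ biprod.fst) ∧
        D.T.map t ≫ Wbeta2 D A act = q ≫ t ≫ biprod.snd := by
  simp only [IsTAlgebraHom, Wbeta, Functor.map_comp, Category.assoc]
  constructor
  · intro h
    exact ⟨by simpa using h =≫ biprod.fst, by simpa using h =≫ biprod.snd⟩
  · rintro ⟨hfst, hsnd⟩
    ext <;> simpa

theorem Wbeta2_restrictScalars {A B : D.T.Algebra} (g : A ⟶ B) {N : C} (act : B.A ⊗ N ⟶ N) :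
    Wbeta2 D A ((g.f ▷ N) ≫ act) = D.T.map (biprod.map g.f (𝟙 N)) ≫ Wbeta2 D B act := by
  have hfst : D.T.map (biprod.map g.f (𝟙 N)) ≫ D.T.map biprod.fst ≫ B.a
      = D.T.map biprod.fst ≫ A.a ≫ g.f := by
    rw [← g.h, ← Functor.map_comp_assoc, ← Functor.map_comp_assoc, biprod.map_fst]
  simp only [Wbeta2]
  rw [reassoc_of% (D.iscodiff.d_natural (biprod.map g.f (𝟙 N)))]
  simp only [tensorHom_comp_tensorHom_assoc, biprod.map_snd_assoc, hfst, ← tensorHom_id,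
    Category.id_comp]

end SquareZeroExtension

theorem statement14_general {C : Type u} [Category.{v} C] [MonoidalCategory C] [SymmetricCategory C]
    [AdditiveMonoidal C] [HasBinaryBiproducts C]
    (D : Codifferential C) (A B : D.T.Algebra) (g : A ⟶ B) {N : C} (act : B.A ⊗ N ⟶ N) :
    (biprod.map g.f (𝟙 N) ≫ biprod.fst = biprod.fst ≫ g.f) ∧
    (∀ (Q : D.T.Algebra) (v : Q.A ⟶ A.A) (u : Q.A ⟶ B.A ⊞ N),
      IsTAlgebraHom D.T Q.a A.a v →
      IsTAlgebraHom D.T Q.a (Wbeta D B act) u →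
      v ≫ g.f = u ≫ biprod.fst →
      ∃! t : Q.A ⟶ A.A ⊞ N,
        IsTAlgebraHom D.T Q.a (Wbeta D A ((g.f ▷ N) ≫ act)) t ∧
        t ≫ biprod.map g.f (𝟙 N) = u ∧ t ≫ biprod.fst = v) := by
  refine ⟨biprod.map_fst _ _, fun Q v u hv hu hcomm => ?_⟩
  have hlift : biprod.lift v (u ≫ biprod.snd) ≫ biprod.map g.f (𝟙 N) = u := by
    ext <;> simp [hcomm]
  refine ⟨biprod.lift v (u ≫ biprod.snd), ⟨?_, hlift, biprod.lift_fst _ _⟩, ?_⟩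
  · rw [isTAlgebraHom_Wbeta_iff, Wbeta2_restrictScalars, ← Functor.map_comp_assoc, hlift]
    exact ⟨by simpa using hv, ((isTAlgebraHom_Wbeta_iff D _ B act u).1 hu).2.trans (by simp)⟩
  · rintro t ⟨-, htu, htv⟩
    ext
    · simpa using htv
    · simpa using htu =≫ biprod.snd

/-- the square with top `g ⊕ 1_N : W(A, N_A) ⟶ W(B, N)`, sides the
projections `π₁`, and bottom `g : A ⟶ B` is a pullback in the category of `T`-algebras
(stated elementwise: it commutes, and it has the universal property of a pullback with
respect to every `T`-algebra `Q`). -/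
theorem statement14 {C : Type u} [Category.{v} C] [MonoidalCategory C] [SymmetricCategory C]
    [AdditiveMonoidal C] [HasBinaryBiproducts C]
    (D : Codifferential C) (A B : D.T.Algebra) (g : A ⟶ B) {N : C} (act : B.A ⊗ N ⟶ N)
    (hact : IsModule (algMul D.toAlgebraModality B) (algUnit D.toAlgebraModality B) act) :
    (biprod.map g.f (𝟙 N) ≫ biprod.fst = biprod.fst ≫ g.f) ∧
    (∀ (Q : D.T.Algebra) (v : Q.A ⟶ A.A) (u : Q.A ⟶ B.A ⊞ N),
      IsTAlgebraHom D.T Q.a A.a v →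
      IsTAlgebraHom D.T Q.a (Wbeta D B act) u →
      v ≫ g.f = u ≫ biprod.fst →
      ∃! t : Q.A ⟶ A.A ⊞ N,
        IsTAlgebraHom D.T Q.a (Wbeta D A ((g.f ▷ N) ≫ act)) t ∧
        t ≫ biprod.map g.f (𝟙 N) = u ∧ t ≫ biprod.fst = v) :=
  statement14_general D A B g act

end CodiffPaper
end
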